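/- arXiv:2103.02741 — 5 statements merged into one kernel-verified Lean document; each statement's English description precedes it below -/
import Mathlib

section
/- Let P_1* ≥ P_2* ≥ ... ≥ P_k* be reals, δ_{ij} = P_i* − P_j*, Δ_l = ∑_{i=l}^k δ_{li}, and ε ≥ 0. Define σ_{ij} = 4·δ_{ij}·(Δ_j + ε)/(Δ_i + ε)^2 (assuming Δ_i + ε > 0). Then for every i ≤ k, ∑_{j=i}^{k} σ_{ij} ≤ 2. -/
/-!
Fix `i` and put `f j = ε + ∑_{m=j}^{k} (P i - P m)`, so that `f j - f (j + 1) = δ_{ij}`,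
`f i = Δ_i + ε` and `f (k + 1) = ε`. Since `δ_{jm} ≤ δ_{im}` for `i ≤ j`, also
`Δ_j + ε ≤ f (j + 1)`. Hence `2 δ_{ij} (Δ_j + ε) ≤ 2 (f j - f (j + 1)) f (j + 1) ≤ f j ^ 2 - f (j + 1) ^ 2`,
which telescopes over `j = i, …, k` to at most `(Δ_i + ε) ^ 2`.
-/

open Finset

theorem sum_Icc_two_mul_sub_mul_le_sq_sub_sq {f x : ℕ → ℝ} {a b : ℕ} (hab : a ≤ b)
    (hf : ∀ j ∈ Icc a b, f (j + 1) ≤ f j) (hx : ∀ j ∈ Icc a b, x j ≤ f (j + 1)) :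
    ∑ j ∈ Icc a b, 2 * (f j - f (j + 1)) * x j ≤ f a ^ 2 - f (b + 1) ^ 2 := by
  calc ∑ j ∈ Icc a b, 2 * (f j - f (j + 1)) * x j
      ≤ ∑ j ∈ Icc a b, -(f (j + 1) ^ 2 - f j ^ 2) := by
        refine sum_le_sum fun j hj => ?_
        nlinarith [hf j hj, hx j hj, sq_nonneg (f j - f (j + 1))]
    _ = f a ^ 2 - f (b + 1) ^ 2 := by
        rw [sum_neg_distrib, sum_Icc_sub hab fun j => f j ^ 2]
        ring

def gapTail (P : ℕ → ℝ) (k i j : ℕ) : ℝ := ∑ m ∈ Icc j k, (P i - P m)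

theorem gapTail_eq_add_gapTail_succ (P : ℕ → ℝ) {k j : ℕ} (i : ℕ) (hj : j ≤ k) :
    gapTail P k i j = (P i - P j) + gapTail P k i (j + 1) := by
  rw [gapTail, ← insert_Icc_add_one_left_eq_Icc hj, sum_insert (by simp), gapTail]

theorem gapTail_of_lt (P : ℕ → ℝ) {k j : ℕ} (i : ℕ) (hj : k < j) : gapTail P k i j = 0 := by
  rw [gapTail, Icc_eq_empty_of_lt hj, sum_empty]

theorem gapTail_self (P : ℕ → ℝ) {k j : ℕ} (hj : j ≤ k) :
    gapTail P k j j = gapTail P k j (j + 1) := by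
  rw [gapTail_eq_add_gapTail_succ P j hj, sub_self, zero_add]

theorem gapTail_mono_left (P : ℕ → ℝ) {k i i' : ℕ} (j : ℕ) (h : P i ≤ P i') :
    gapTail P k i j ≤ gapTail P k i' j :=
  sum_le_sum fun _ _ => sub_le_sub_right h _

theorem sum_Icc_two_mul_sub_mul_gapTail_le (P : ℕ → ℝ) {k i : ℕ} (ε : ℝ) (hik : i ≤ k)
    (hmono : ∀ j ∈ Icc i k, P j ≤ P i) :
    ∑ j ∈ Icc i k, 2 * (P i - P j) * (gapTail P k j j + ε) ≤
      (gapTail P k i i + ε) ^ 2 - ε ^ 2 := by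
  set f : ℕ → ℝ := fun j => gapTail P k i j + ε
  have hstep : ∀ j ∈ Icc i k, f j - f (j + 1) = P i - P j := fun j hj => by
    simp only [f, gapTail_eq_add_gapTail_succ P i (mem_Icc.1 hj).2]
    ring
  have hbound : ∀ j ∈ Icc i k, gapTail P k j j + ε ≤ f (j + 1) := fun j hj => by
    rw [gapTail_self P (mem_Icc.1 hj).2]
    linarith [gapTail_mono_left P (k := k) (j + 1) (hmono j hj)]
  have hfk : f (k + 1) = ε := by simp only [f, gapTail_of_lt P i k.lt_succ_self, zero_add]
  calc ∑ j ∈ Icc i k, 2 * (P i - P j) * (gapTail P k j j + ε)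
      = ∑ j ∈ Icc i k, 2 * (f j - f (j + 1)) * (gapTail P k j j + ε) :=
        sum_congr rfl fun j hj => by rw [hstep j hj]
    _ ≤ f i ^ 2 - f (k + 1) ^ 2 :=
        sum_Icc_two_mul_sub_mul_le_sq_sub_sq hik
          (fun j hj => by linarith [hstep j hj, hmono j hj]) hbound
    _ = (gapTail P k i i + ε) ^ 2 - ε ^ 2 := by rw [hfk]

theorem stmt2_general (k : ℕ) (P : ℕ → ℝ)
    (hmono : ∀ i j, 1 ≤ i → i ≤ j → j ≤ k → P j ≤ P i)
    (ε : ℝ)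
    (Δ : ℕ → ℝ) (hΔ : ∀ l, Δ l = ∑ i ∈ Finset.Icc l k, (P l - P i)) :
    ∀ i, 1 ≤ i → i ≤ k →
      ∑ j ∈ Finset.Icc i k, 4 * (P i - P j) * (Δ j + ε) / (Δ i + ε) ^ 2 ≤ 2 := by
  intro i hi hik
  obtain rfl : Δ = fun l => gapTail P k l l := funext hΔ
  have hsum := sum_Icc_two_mul_sub_mul_gapTail_le P ε hik
    fun j hj => hmono i j hi (mem_Icc.1 hj).1 (mem_Icc.1 hj).2
  rw [← sum_div]
  refine div_le_of_le_mul₀ (sq_nonneg _) zero_le_two ?_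
  calc ∑ j ∈ Icc i k, 4 * (P i - P j) * (gapTail P k j j + ε)
      = 2 * ∑ j ∈ Icc i k, 2 * (P i - P j) * (gapTail P k j j + ε) := by
        rw [mul_sum]; exact sum_congr rfl fun _ _ => by ring
    _ ≤ 2 * (gapTail P k i i + ε) ^ 2 := by linarith [sq_nonneg ε]

theorem stmt2 (k : ℕ) (P : ℕ → ℝ)
    (hmono : ∀ i j, 1 ≤ i → i ≤ j → j ≤ k → P j ≤ P i)
    (ε : ℝ) (hε : 0 ≤ ε)
    (Δ : ℕ → ℝ) (hΔ : ∀ l, Δ l = ∑ i ∈ Finset.Icc l k, (P l - P i))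
    (hpos : ∀ i, 1 ≤ i → i ≤ k → 0 < Δ i + ε) :
    ∀ i, 1 ≤ i → i ≤ k →
      ∑ j ∈ Finset.Icc i k, 4 * (P i - P j) * (Δ j + ε) / (Δ i + ε) ^ 2 ≤ 2 :=
  stmt2_general k P hmono ε Δ hΔ
end

section
/- Let σ: {(i,j) : 1 ≤ i < j ≤ k} → ℝ≥0 satisfy ∑_{j=i+1}^{k} σ_{ij} ≤ 2 for all i. Define f(i,j) recursively (on j − i) by f(i,j) = 0.4·σ_{ij} + ∑_{m=i+1}^{j−1} 0.4·σ_{im}·f(m,j). Then f(i,j) ≤ 1 for all 1 ≤ i < j ≤ k. -/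
open Finset

theorem le_one_of_eq_add_sum_mul_of_sum_le_one {k : ℕ} {w f : ℕ → ℕ → ℝ}
    (hw : ∀ i j, 1 ≤ i → i < j → j ≤ k → 0 ≤ w i j)
    (hrow : ∀ i, 1 ≤ i → i ≤ k → ∑ j ∈ Ioc i k, w i j ≤ 1)
    (hf : ∀ i j, 1 ≤ i → i < j → j ≤ k →
      f i j = w i j + ∑ m ∈ Ioo i j, w i m * f m j)
    {i j : ℕ} (hi : 1 ≤ i) (hij : i < j) (hjk : j ≤ k) : f i j ≤ 1 :=
  calc f i j = w i j + ∑ m ∈ Ioo i j, w i m * f m j := hf i j hi hij hjk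
    _ ≤ w i j + ∑ m ∈ Ioo i j, w i m := by
        gcongr with m hm
        obtain ⟨him, hmj⟩ := mem_Ioo.mp hm
        exact mul_le_of_le_one_right (hw i m hi him (by omega))
          (le_one_of_eq_add_sum_mul_of_sum_le_one hw hrow hf (by omega) hmj hjk)
    _ = ∑ m ∈ Ioc i j, w i m := by
        rw [← Ioo_insert_right hij, sum_insert right_notMem_Ioo]
    _ ≤ ∑ m ∈ Ioc i k, w i m :=
        sum_le_sum_of_subset_of_nonneg (Ioc_subset_Ioc_right hjk)
          fun m hm _ => hw i m hi (mem_Ioc.mp hm).1 (mem_Ioc.mp hm).2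
    _ ≤ 1 := hrow i hi (by omega)
termination_by j - i

theorem stmt3 (k : ℕ) (σ : ℕ → ℕ → ℝ)
    (hσ : ∀ i j, 1 ≤ i → i < j → j ≤ k → 0 ≤ σ i j)
    (hrow : ∀ i, 1 ≤ i → i ≤ k → ∑ j ∈ Finset.Ioc i k, σ i j ≤ 2)
    (f : ℕ → ℕ → ℝ)
    (hf : ∀ i j, 1 ≤ i → i < j → j ≤ k →
      f i j = 0.4 * σ i j + ∑ m ∈ Finset.Ioo i j, 0.4 * σ i m * f m j) :
    ∀ i j, 1 ≤ i → i < j → j ≤ k → f i j ≤ 1 := by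
  intro i j hi hij hjk
  have hw : ∀ i j, 1 ≤ i → i < j → j ≤ k → (0 : ℝ) ≤ 0.4 * σ i j :=
    fun i j hi hij hjk => mul_nonneg (by norm_num) (hσ i j hi hij hjk)
  have hweight_row : ∀ i, 1 ≤ i → i ≤ k → ∑ j ∈ Ioc i k, (0.4 : ℝ) * σ i j ≤ 1 := by
    intro i hi hik
    calc ∑ j ∈ Ioc i k, (0.4 : ℝ) * σ i j = 0.4 * ∑ j ∈ Ioc i k, σ i j := (mul_sum ..).symm
      _ ≤ 0.4 * 2 := by gcongr; exact hrow i hi hik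
      _ ≤ 1 := by norm_num
  exact le_one_of_eq_add_sum_mul_of_sum_le_one hw hweight_row hf hi hij hjk
end

section
/- In the Multinomial Logit model, where each arm a_i has utility v_i ∈ ℝ and P(a_i | s) = e^{v_i} / (e^{v_0} + ∑_{a_j ∈ s} e^{v_j}) for a set s containing a_i, the weak optimal set consistency assumption holds: if s* maximizes ∑_{a_i ∈ s} P(a_i | s) over all size-k subsets s (equivalently, s* consists of the k arms with largest v_i), then for any size-k set s and any arm a ∈ s ∩ s*, P(a | s) ≥ P(a | s*). -/
/-!
The total acceptance probability of `s` is `S / (e^{v₀} + S)` with `S = ∑_{j ∈ s} e^{v_j}`, an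
increasing function of `S`. Optimality of `s*` therefore says that `s*` has the largest total
weight among sets of size `k`, i.e. `P(a | s*)` has the largest denominator.
-/

open Finset

lemma div_add_self_le_div_add_self_iff {K : Type*} [Field K] [LinearOrder K] [IsStrictOrderedRing K]
    {c x y : K} (hc : 0 < c) (hx : 0 ≤ x) (hy : 0 ≤ y) :
    x / (c + x) ≤ y / (c + y) ↔ x ≤ y := by
  rw [div_le_div_iff₀ (by positivity) (by positivity),
    show x * (c + y) = c * x + x * y by ring, show y * (c + x) = c * y + x * y by ring,
    add_le_add_iff_right, mul_le_mul_iff_right₀ hc]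

lemma sum_div_add_sum_le_iff {ι : Type*} {w : ι → ℝ} (hw : ∀ i, 0 ≤ w i) {c : ℝ} (hc : 0 < c)
    (s t : Finset ι) :
    ∑ i ∈ s, w i / (c + ∑ j ∈ s, w j) ≤ ∑ i ∈ t, w i / (c + ∑ j ∈ t, w j) ↔
      ∑ j ∈ s, w j ≤ ∑ j ∈ t, w j := by
  rw [← sum_div, ← sum_div, div_add_self_le_div_add_self_iff hc (sum_nonneg fun i _ => hw i)
    (sum_nonneg fun i _ => hw i)]

theorem stmt7_general (n k : ℕ) (v : Fin n → ℝ) (v0 : ℝ)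
    (sstar : Finset (Fin n))
    (hopt : ∀ s : Finset (Fin n), s.card = k →
      ∑ a ∈ s, Real.exp (v a) / (Real.exp v0 + ∑ j ∈ s, Real.exp (v j)) ≤
        ∑ a ∈ sstar, Real.exp (v a) / (Real.exp v0 + ∑ j ∈ sstar, Real.exp (v j))) :
    ∀ s : Finset (Fin n), s.card = k → ∀ a, a ∈ s → a ∈ sstar →
      Real.exp (v a) / (Real.exp v0 + ∑ j ∈ sstar, Real.exp (v j)) ≤
        Real.exp (v a) / (Real.exp v0 + ∑ j ∈ s, Real.exp (v j)) := by
  intro s hs a _ _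
  have hweight : ∑ j ∈ s, Real.exp (v j) ≤ ∑ j ∈ sstar, Real.exp (v j) :=
    (sum_div_add_sum_le_iff (fun i => (Real.exp_pos (v i)).le) (Real.exp_pos v0) s sstar).1
      (hopt s hs)
  gcongr

theorem stmt7 (n k : ℕ) (v : Fin n → ℝ) (v0 : ℝ)
    (sstar : Finset (Fin n)) (hcard : sstar.card = k)
    (hopt : ∀ s : Finset (Fin n), s.card = k →
      ∑ a ∈ s, Real.exp (v a) / (Real.exp v0 + ∑ j ∈ s, Real.exp (v j)) ≤
        ∑ a ∈ sstar, Real.exp (v a) / (Real.exp v0 + ∑ j ∈ sstar, Real.exp (v j))) :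
    ∀ s : Finset (Fin n), s.card = k → ∀ a, a ∈ s → a ∈ sstar →
      Real.exp (v a) / (Real.exp v0 + ∑ j ∈ sstar, Real.exp (v j)) ≤
        Real.exp (v a) / (Real.exp v0 + ∑ j ∈ s, Real.exp (v j)) :=
  stmt7_general n k v v0 sstar hopt
end

section
/- Let (c_l)_{l=1}^{k} be nonnegative reals satisfying c_l ≤ 3.08 + 0.275·∑_{i=1}^{l−1} σ_{il}·c_i, where σ_{ij} ≥ 0 and ∑_{j=i+1}^{k} σ_{ij} ≤ 2 for every i. Then c_l ≤ 10·l for all l. -/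
/-!
Summing the recursion over `l < n` and exchanging the order of summation, every `c i` is counted
with total weight `∑_{l>i} σ i l ≤ R`, so the partial sums `S n = ∑_{i<n} c i` satisfy
`S n ≤ a (n - 1) + b R S n`, i.e. `S n ≤ a (n - 1) / (1 - b R)`. Since also `σ i l ≤ R`, the
recursion gives `c l ≤ a + b R S l ≤ a l / (1 - b R)`; for `a = 3.08`, `b = 0.275`, `R = 2`
the constant is `3.08 / 0.45 < 10`.
-/

open Finset

namespace WeightedRecursion

variable {k : ℕ} {c : ℕ → ℝ} {σ : ℕ → ℕ → ℝ} {R : ℝ}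

lemma sum_le_of_subset_Ioc (hσ : ∀ i j, 1 ≤ i → i < j → j ≤ k → 0 ≤ σ i j)
    (hrow : ∀ i, 1 ≤ i → i ≤ k → ∑ j ∈ Ioc i k, σ i j ≤ R)
    {i : ℕ} (hi : 1 ≤ i) (hik : i ≤ k) {s : Finset ℕ} (hs : s ⊆ Ioc i k) :
    ∑ j ∈ s, σ i j ≤ R :=
  (sum_le_sum_of_subset_of_nonneg hs fun j hj _ =>
    hσ i j hi (mem_Ioc.mp hj).1 (mem_Ioc.mp hj).2).trans (hrow i hi hik)

lemma sum_mul_le_mul_sum (hc0 : ∀ l, 1 ≤ l → l ≤ k → 0 ≤ c l)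
    (hσ : ∀ i j, 1 ≤ i → i < j → j ≤ k → 0 ≤ σ i j)
    (hrow : ∀ i, 1 ≤ i → i ≤ k → ∑ j ∈ Ioc i k, σ i j ≤ R)
    {l : ℕ} (hlk : l ≤ k) :
    ∑ i ∈ Ico 1 l, σ i l * c i ≤ R * ∑ i ∈ Ico 1 l, c i := by
  rw [mul_sum]
  refine sum_le_sum fun i hi => ?_
  obtain ⟨h1i, hil⟩ := mem_Ico.mp hi
  have hσR : σ i l ≤ R := by
    simpa using sum_le_of_subset_Ioc hσ hrow h1i (hil.le.trans hlk)
      (singleton_subset_iff.mpr (mem_Ioc.mpr ⟨hil, hlk⟩))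
  exact mul_le_mul_of_nonneg_right hσR (hc0 i h1i (hil.le.trans hlk))

lemma sum_sum_mul_le_mul_sum (hc0 : ∀ l, 1 ≤ l → l ≤ k → 0 ≤ c l)
    (hσ : ∀ i j, 1 ≤ i → i < j → j ≤ k → 0 ≤ σ i j)
    (hrow : ∀ i, 1 ≤ i → i ≤ k → ∑ j ∈ Ioc i k, σ i j ≤ R)
    {n : ℕ} (hn : n ≤ k + 1) :
    ∑ l ∈ Ico 1 n, ∑ i ∈ Ico 1 l, σ i l * c i ≤ R * ∑ i ∈ Ico 1 n, c i := by
  have hswap : ∑ l ∈ Ico 1 n, ∑ i ∈ Ico 1 l, σ i l * c i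
      = ∑ i ∈ Ico 1 n, (∑ l ∈ Ioo i n, σ i l) * c i := by
    simp_rw [sum_mul]
    refine sum_comm' fun l i => ?_
    simp only [mem_Ico, mem_Ioo]
    omega
  rw [hswap, mul_sum]
  refine sum_le_sum fun i hi => ?_
  obtain ⟨h1i, hin⟩ := mem_Ico.mp hi
  have hsub : Ioo i n ⊆ Ioc i k := fun j hj => by
    simp only [mem_Ioo, mem_Ioc] at hj ⊢
    omega
  exact mul_le_mul_of_nonneg_right (sum_le_of_subset_Ioc hσ hrow h1i (by omega) hsub)
    (hc0 i h1i (by omega))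

lemma mul_partial_sum_le {a b : ℝ} (hb : 0 ≤ b)
    (hc0 : ∀ l, 1 ≤ l → l ≤ k → 0 ≤ c l)
    (hσ : ∀ i j, 1 ≤ i → i < j → j ≤ k → 0 ≤ σ i j)
    (hrow : ∀ i, 1 ≤ i → i ≤ k → ∑ j ∈ Ioc i k, σ i j ≤ R)
    (hrec : ∀ l, 1 ≤ l → l ≤ k → c l ≤ a + b * ∑ i ∈ Ico 1 l, σ i l * c i)
    {n : ℕ} (hn : n ≤ k + 1) :
    (1 - b * R) * ∑ i ∈ Ico 1 n, c i ≤ a * (n - 1 : ℕ) := by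
  have hsum : ∑ l ∈ Ico 1 n, c l ≤ ∑ l ∈ Ico 1 n, (a + b * ∑ i ∈ Ico 1 l, σ i l * c i) :=
    sum_le_sum fun l hl => by
      obtain ⟨h1l, hln⟩ := mem_Ico.mp hl
      exact hrec l h1l (by omega)
  rw [sum_add_distrib, sum_const, Nat.card_Ico, nsmul_eq_mul, ← mul_sum] at hsum
  have hdouble := mul_le_mul_of_nonneg_left (sum_sum_mul_le_mul_sum hc0 hσ hrow hn) hb
  nlinarith

theorem le_div_mul_of_le_add_mul_sum {a b : ℝ} (ha : 0 ≤ a) (hb : 0 ≤ b) (hR : 0 ≤ R)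
    (hbR : b * R < 1)
    (hc0 : ∀ l, 1 ≤ l → l ≤ k → 0 ≤ c l)
    (hσ : ∀ i j, 1 ≤ i → i < j → j ≤ k → 0 ≤ σ i j)
    (hrow : ∀ i, 1 ≤ i → i ≤ k → ∑ j ∈ Ioc i k, σ i j ≤ R)
    (hrec : ∀ l, 1 ≤ l → l ≤ k → c l ≤ a + b * ∑ i ∈ Ico 1 l, σ i l * c i)
    {l : ℕ} (hl : 1 ≤ l) (hlk : l ≤ k) :
    c l ≤ a / (1 - b * R) * l := by
  have hpos : 0 < 1 - b * R := by linarith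
  have hbR0 : 0 ≤ b * R := mul_nonneg hb hR
  have hl1 : (1 : ℝ) ≤ l := by exact_mod_cast hl
  have hcast : ((l - 1 : ℕ) : ℝ) = l - 1 := by push_cast [hl]; ring
  have hpartial := mul_partial_sum_le hb hc0 hσ hrow hrec (n := l) (by omega)
  rw [hcast] at hpartial
  have hcl : c l ≤ a + b * R * ∑ i ∈ Ico 1 l, c i := by
    have := mul_le_mul_of_nonneg_left (sum_mul_le_mul_sum hc0 hσ hrow hlk) hb
    linarith [hrec l hl hlk]
  rw [div_mul_eq_mul_div, le_div_iff₀ hpos]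
  calc c l * (1 - b * R)
      ≤ a * (1 - b * R) + b * R * ((1 - b * R) * ∑ i ∈ Ico 1 l, c i) := by
        nlinarith [mul_le_mul_of_nonneg_left hcl hpos.le]
    _ ≤ a * (1 - b * R) + b * R * (a * (l - 1)) := by gcongr
    _ ≤ a * l := by
        nlinarith [mul_nonneg (mul_nonneg ha (sub_nonneg.mpr hl1)) hpos.le, mul_nonneg ha hbR0]

end WeightedRecursion

theorem stmt14 (k : ℕ) (c : ℕ → ℝ) (σ : ℕ → ℕ → ℝ)
    (hc0 : ∀ l, 1 ≤ l → l ≤ k → 0 ≤ c l)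
    (hσ : ∀ i j, 1 ≤ i → i < j → j ≤ k → 0 ≤ σ i j)
    (hrow : ∀ i, 1 ≤ i → i ≤ k → ∑ j ∈ Finset.Ioc i k, σ i j ≤ 2)
    (hrec : ∀ l, 1 ≤ l → l ≤ k →
      c l ≤ 3.08 + 0.275 * ∑ i ∈ Finset.Ico 1 l, σ i l * c i) :
    ∀ l, 1 ≤ l → l ≤ k → c l ≤ 10 * l := by
  intro l hl hlk
  have hbound := WeightedRecursion.le_div_mul_of_le_add_mul_sum (by norm_num) (by norm_num)
    (by norm_num) (by norm_num) hc0 hσ hrow hrec hl hlk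
  have hconst : (3.08 : ℝ) / (1 - 0.275 * 2) ≤ 10 := by norm_num
  exact hbound.trans (mul_le_mul_of_nonneg_right hconst l.cast_nonneg)
end

section
/- Suppose the sequence ρ(t) = min_{τ ≤ t} min_{i ∈ s(τ)} UCB_i(τ) generated by the top-k UCB selection rule satisfies: UCB values of unselected arms are unchanged between rounds, and s(t) consists of the k arms with largest UCB_i(t). Then for every t and every arm i ∉ s(t), UCB_i(t) ≤ ρ(t). -/
/-!
An arm that is unselected at round `t + 1` is dominated by some arm unselected at round `t`:
either itself (its value is frozen), or, if it was just evicted, by an arm that entered the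
selection and hence was unselected, with frozen value, at round `t`. Iterating back to any
round `τ ≤ t`, where every unselected arm lies below every selected one, shows that an arm
unselected at round `t` lies below every value selected at any round `τ ≤ t`, in particular
below their minimum `ρ t`.
-/

open Finset

theorem Finset.exists_mem_notMem_of_card_le_of_mem_notMem {α : Type*} {s t : Finset α} {a : α}
    (hcard : #s ≤ #t) (has : a ∈ s) (hat : a ∉ t) : ∃ b ∈ t, b ∉ s := by
  refine not_subset.mp fun hts => hat ?_
  rwa [eq_of_subset_of_card_le hts hcard]

section TopKSelection

variable {α β : Type*} [Preorder β] {UCB : ℕ → α → β} {s : ℕ → Finset α}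

theorem exists_notMem_le_of_notMem_succ
    (hcard : ∀ t, #(s t) ≤ #(s (t + 1)))
    (htop : ∀ t, ∀ i ∈ s t, ∀ j, j ∉ s t → UCB t j ≤ UCB t i)
    (hfreeze : ∀ t, ∀ j, j ∉ s t → UCB (t + 1) j = UCB t j)
    {t : ℕ} {i : α} (hi : i ∉ s (t + 1)) : ∃ c ∉ s t, UCB (t + 1) i ≤ UCB t c := by
  by_cases hit : i ∈ s t
  · obtain ⟨c, hc, hct⟩ := exists_mem_notMem_of_card_le_of_mem_notMem (hcard t) hit hi
    exact ⟨c, hct, (htop (t + 1) c hc i hi).trans_eq (hfreeze t c hct)⟩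
  · exact ⟨i, hit, (hfreeze t i hit).le⟩

theorem le_of_notMem_of_mem_of_le
    (hcard : ∀ t, #(s t) ≤ #(s (t + 1)))
    (htop : ∀ t, ∀ i ∈ s t, ∀ j, j ∉ s t → UCB t j ≤ UCB t i)
    (hfreeze : ∀ t, ∀ j, j ∉ s t → UCB (t + 1) j = UCB t j)
    {τ t : ℕ} (hτt : τ ≤ t) {j : α} (hj : j ∈ s τ) :
    ∀ i, i ∉ s t → UCB t i ≤ UCB τ j := by
  induction t, hτt using Nat.le_induction with
  | base => exact htop τ j hj
  | succ t _ ih =>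
    intro i hi
    obtain ⟨c, hc, hic⟩ := exists_notMem_le_of_notMem_succ hcard htop hfreeze hi
    exact hic.trans (ih c hc)

end TopKSelection

theorem stmt19_general (n k : ℕ)
    (UCB : ℕ → Fin n → ℝ) (s : ℕ → Finset (Fin n))
    (hcard : ∀ t, (s t).card = k)
    (htop : ∀ t, ∀ i ∈ s t, ∀ j, j ∉ s t → UCB t j ≤ UCB t i)
    (hfreeze : ∀ t, ∀ j, j ∉ s t → UCB (t + 1) j = UCB t j)
    (ρ : ℕ → ℝ)
    (hρ : ∀ t, IsLeast {x : ℝ | ∃ τ ≤ t, ∃ i ∈ s τ, x = UCB τ i} (ρ t)) :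
    ∀ t, ∀ i, i ∉ s t → UCB t i ≤ ρ t := by
  intro t i hi
  have hcard_mono : ∀ t, #(s t) ≤ #(s (t + 1)) := fun t => (hcard t).trans_le (hcard (t + 1)).ge
  obtain ⟨τ, hτt, j, hj, hρt⟩ := (hρ t).1
  rw [hρt]
  exact le_of_notMem_of_mem_of_le hcard_mono htop hfreeze hτt hj i hi

theorem stmt19 (n k : ℕ) (hk : 1 ≤ k)
    (UCB : ℕ → Fin n → ℝ) (s : ℕ → Finset (Fin n))
    (hcard : ∀ t, (s t).card = k)
    (htop : ∀ t, ∀ i ∈ s t, ∀ j, j ∉ s t → UCB t j ≤ UCB t i)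
    (hfreeze : ∀ t, ∀ j, j ∉ s t → UCB (t + 1) j = UCB t j)
    (ρ : ℕ → ℝ)
    (hρ : ∀ t, IsLeast {x : ℝ | ∃ τ ≤ t, ∃ i ∈ s τ, x = UCB τ i} (ρ t)) :
    ∀ t, ∀ i, i ∉ s t → UCB t i ≤ ρ t :=
  stmt19_general n k UCB s hcard htop hfreeze ρ hρ
end
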